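/- arXiv:2602.06098 — 3 statements merged into one kernel-verified Lean document; each statement's English description precedes it below -/
import Mathlib

section
/- Let Z be a random variable with values in [0,1], E[Z] = μ ∈ (0,1). Let Z_1,…,Z_m be i.i.d. copies of Z. Define the smooth estimator S_m := (1/m) Σ_j Z_j and the sharp estimator H_m := Π_{j=1}^m 1{Z_j = 1}. Define SNR(X) := (E[X])² / Var(X) (with the convention that the claim is stated assuming Var(H_m) > 0, i.e., 0 < P[Z=1] < 1 implies p_1^m ∈ (0,1)). Then SNR(S_m)/SNR(H_m) ≥ m · (1/μ)^{m−1} · (1 − μ^m)/(1 − μ) ≥ m². -/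
/-!
The sample mean of `m` i.i.d. copies of `Z ∈ [0,1]` has variance `Var Z / m`, and the Bhatia–Davis
bound `Var Z ≤ μ (1 - μ)` gives `SNR(S_m) ≥ m μ / (1 - μ)`. The sharp estimator is a Bernoulli
variable of parameter `p₁ ^ m` with `p₁ = P[Z = 1] ≤ μ` (Markov), so
`SNR(H_m) = p₁ ^ m / (1 - p₁ ^ m) ≤ μ ^ m / (1 - μ ^ m)`. Dividing, the ratio is at least
`m μ^{1-m} (1 + μ + ⋯ + μ^{m-1})`, and each of the `m` terms `μ^{k-(m-1)}` is at least `1`.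
-/

open MeasureTheory ProbabilityTheory
open scoped Classical

noncomputable def snr {Ω : Type*} [MeasurableSpace Ω] (X : Ω → ℝ) (P : Measure Ω) : ℝ :=
  (∫ ω, X ω ∂P) ^ 2 / variance X P

lemma div_one_sub_le_div_one_sub {a b : ℝ} (ha : 0 ≤ a) (hab : a ≤ b) (hb : b < 1) :
    a / (1 - a) ≤ b / (1 - b) :=
  div_le_div₀ (ha.trans hab) hab (by linarith) (by linarith)

lemma mul_div_one_sub_div_pow_div_one_sub_pow {μ : ℝ} (hμ : μ ≠ 0) {m : ℕ} (hm : 1 ≤ m) :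
    (m * μ / (1 - μ)) / (μ ^ m / (1 - μ ^ m)) =
      m * (1 / μ) ^ (m - 1) * ((1 - μ ^ m) / (1 - μ)) := by
  obtain ⟨k, rfl⟩ := Nat.exists_eq_add_of_le' hm
  simp only [Nat.add_sub_cancel, one_div, inv_pow, pow_succ]
  field_simp

lemma natCast_le_inv_pow_mul_geom {μ : ℝ} (hμ0 : 0 < μ) (hμ1 : μ < 1) (m : ℕ) :
    (m : ℝ) ≤ (1 / μ) ^ (m - 1) * ((1 - μ ^ m) / (1 - μ)) := by
  have hgeom : (1 - μ ^ m) / (1 - μ) = ∑ k ∈ Finset.range m, μ ^ k := by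
    rw [geom_sum_eq hμ1.ne m, div_eq_div_iff (by linarith) (by linarith)]
    ring
  rw [hgeom, Finset.mul_sum]
  calc (m : ℝ) = ∑ _k ∈ Finset.range m, (1 : ℝ) := by simp
    _ ≤ ∑ k ∈ Finset.range m, (1 / μ) ^ (m - 1) * μ ^ k := by
      refine Finset.sum_le_sum fun k hk => ?_
      have hk : k ≤ m - 1 := by have := Finset.mem_range.1 hk; omega
      rw [div_pow, one_pow, one_div_mul_eq_div, one_le_div (pow_pos hμ0 _)]
      exact pow_le_pow_of_le_one hμ0.le hμ1.le hk

section Probability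

variable {Ω : Type*} [MeasurableSpace Ω] {P : Measure Ω}

lemma variance_indicator_one [IsProbabilityMeasure P] {A : Set Ω} (hA : MeasurableSet A) :
    variance (A.indicator 1) P = P.real A * (1 - P.real A) := by
  have hsq : A.indicator (1 : Ω → ℝ) ^ 2 = A.indicator 1 := by
    ext ω
    by_cases hω : ω ∈ A <;> simp [hω]
  have hL2 : MemLp (A.indicator (1 : Ω → ℝ)) 2 P := (memLp_const 1).indicator hA
  rw [variance_eq_sub hL2, hsq, integral_indicator_one hA]
  ring

lemma snr_indicator_one [IsProbabilityMeasure P] {A : Set Ω} (hA : MeasurableSet A) :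
    snr (A.indicator 1) P = P.real A / (1 - P.real A) := by
  rw [snr, integral_indicator_one hA, variance_indicator_one hA]
  rcases eq_or_ne (P.real A) 0 with h | h
  · simp [h]
  · rw [sq, mul_div_mul_left _ _ h]

lemma variance_pos_of_measureReal_pos [IsProbabilityMeasure P] {X : Ω → ℝ} (hX : MemLp X 2 P)
    {a : ℝ} (ha : a ≠ ∫ ω, X ω ∂P) (hpos : 0 < P.real {ω | X ω = a}) : 0 < variance X P := by
  refine (variance_nonneg X P).lt_of_ne fun h => hpos.ne' ?_
  have hconst : X =ᵐ[P] fun _ => ∫ ω, X ω ∂P := by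
    rw [← evariance_eq_zero_iff hX.aemeasurable, ← hX.ofReal_variance_eq, ← h,
      ENNReal.ofReal_zero]
  rw [measureReal_eq_zero_iff]
  exact measure_mono_null (fun ω (hω : X ω = a) hω' => ha (hω ▸ hω')) (ae_iff.1 hconst)

lemma mul_measureReal_eq_le_integral [IsFiniteMeasure P] {X : Ω → ℝ} (hX0 : 0 ≤ᵐ[P] X)
    (hX : Integrable X P) {c : ℝ} (hc : 0 ≤ c) : c * P.real {ω | X ω = c} ≤ ∫ ω, X ω ∂P :=
  calc c * P.real {ω | X ω = c} ≤ c * P.real {ω | c ≤ X ω} :=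
        mul_le_mul_of_nonneg_left (measureReal_mono fun ω hω => le_of_eq hω.symm) hc
    _ ≤ ∫ ω, X ω ∂P := mul_meas_ge_le_integral_of_nonneg hX0 hX c

variable {ι : Type*} [Fintype ι] {X : ι → Ω → ℝ}

lemma integral_average [Nonempty ι] (hX : ∀ i, Integrable (X i) P) {μ : ℝ}
    (hμ : ∀ i, ∫ ω, X i ω ∂P = μ) : ∫ ω, (1 : ℝ) / Fintype.card ι * ∑ i, X i ω ∂P = μ := by
  rw [integral_const_mul, integral_finsetSum _ fun i _ => hX i]
  simp [hμ, Finset.card_univ]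

lemma variance_average (hX : ∀ i, MemLp (X i) 2 P) (hindep : Pairwise fun i j => X i ⟂ᵢ[P] X j)
    {v : ℝ} (hv : ∀ i, variance (X i) P = v) :
    variance (fun ω => (1 : ℝ) / Fintype.card ι * ∑ i, X i ω) P = v / Fintype.card ι := by
  have hsum : variance (∑ i, X i) P = Fintype.card ι * v := by
    rw [IndepFun.variance_sum (fun i _ => hX i) fun i _ j _ hij => hindep hij]
    simp [hv, Finset.card_univ]
  simp_rw [← Finset.sum_apply]
  rw [variance_const_mul, hsum]
  rcases eq_or_ne (Fintype.card ι : ℝ) 0 with h | h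
  · simp [h]
  · field_simp

lemma snr_average [IsFiniteMeasure P] [Nonempty ι] (hX : ∀ i, MemLp (X i) 2 P)
    (hindep : Pairwise fun i j => X i ⟂ᵢ[P] X j) {i₀ : ι}
    (hident : ∀ i, IdentDistrib (X i) (X i₀) P P) :
    snr (fun ω => (1 : ℝ) / Fintype.card ι * ∑ i, X i ω) P =
      Fintype.card ι * (∫ ω, X i₀ ω ∂P) ^ 2 / variance (X i₀) P := by
  rw [snr, integral_average (fun i => (hX i).integrable one_le_two) fun i => (hident i).integral_eq,
    variance_average hX hindep fun i => (hident i).variance_eq, div_div_eq_mul_div]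
  ring

lemma measureReal_iInter_preimage_eq_pow (hindep : iIndepFun X P) {i₀ : ι}
    (hident : ∀ i, IdentDistrib (X i) (X i₀) P P) {s : Set ℝ} (hs : MeasurableSet s) :
    P.real (⋂ i, X i ⁻¹' s) = P.real (X i₀ ⁻¹' s) ^ Fintype.card ι := by
  have h := hindep.measure_inter_preimage_eq_mul Finset.univ (sets := fun _ => s) fun _ _ => hs
  simp only [Finset.mem_univ, Set.iInter_true] at h
  simp [measureReal_def, h, (hident _).measure_mem_eq hs]

lemma mul_div_one_sub_le_snr_average [IsProbabilityMeasure P] [Nonempty ι]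
    (hX : ∀ i, MemLp (X i) 2 P) (hindep : Pairwise fun i j => X i ⟂ᵢ[P] X j) {i₀ : ι}
    (hident : ∀ i, IdentDistrib (X i) (X i₀) P P) (hIcc : ∀ᵐ ω ∂P, X i₀ ω ∈ Set.Icc (0 : ℝ) 1)
    (hvar : 0 < variance (X i₀) P) {μ : ℝ} (hμ : ∫ ω, X i₀ ω ∂P = μ) (hμ0 : 0 < μ) :
    Fintype.card ι * μ / (1 - μ) ≤ snr (fun ω => (1 : ℝ) / Fintype.card ι * ∑ i, X i ω) P := by
  have hvar_le : variance (X i₀) P ≤ μ * (1 - μ) := by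
    simpa [hμ, mul_comm] using variance_le_sub_mul_sub hIcc (hX i₀).aemeasurable
  rw [snr_average hX hindep hident, hμ]
  calc (Fintype.card ι : ℝ) * μ / (1 - μ) = Fintype.card ι * μ ^ 2 / (μ * (1 - μ)) := by
        field_simp
    _ ≤ Fintype.card ι * μ ^ 2 / variance (X i₀) P := by gcongr

lemma snr_prod_ite_eq_one [IsProbabilityMeasure P] (hmeas : ∀ i, Measurable (X i))
    (hindep : iIndepFun X P) {i₀ : ι} (hident : ∀ i, IdentDistrib (X i) (X i₀) P P) :
    snr (fun ω => ∏ i, if X i ω = 1 then (1 : ℝ) else 0) P =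
      P.real {ω | X i₀ ω = 1} ^ Fintype.card ι /
        (1 - P.real {ω | X i₀ ω = 1} ^ Fintype.card ι) := by
  have hA : MeasurableSet (⋂ i, X i ⁻¹' {1}) :=
    MeasurableSet.iInter fun i => hmeas i (measurableSet_singleton 1)
  have hind : (fun ω => ∏ i, if X i ω = 1 then (1 : ℝ) else 0) =
      (⋂ i, X i ⁻¹' {1}).indicator 1 := by
    ext ω
    simp [Finset.prod_boole, Set.indicator_apply]
  rw [hind, snr_indicator_one hA,
    measureReal_iInter_preimage_eq_pow hindep hident (measurableSet_singleton 1)]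
  rfl

end Probability

theorem stmt_6_general {Ω : Type*} [MeasureSpace Ω] [IsProbabilityMeasure (ℙ : Measure Ω)]
    (m : ℕ) (hm : 1 ≤ m)
    (Z : Fin m → Ω → ℝ) (hmeas : ∀ j, Measurable (Z j))
    (hindep : iIndepFun Z (ℙ : Measure Ω))
    (hident : ∀ j, Measure.map (Z j) (ℙ : Measure Ω) = Measure.map (Z ⟨0, hm⟩) (ℙ : Measure Ω))
    (h0 : ∀ j, ∀ᵐ ω ∂(ℙ : Measure Ω), 0 ≤ Z j ω)
    (h1 : ∀ j, ∀ᵐ ω ∂(ℙ : Measure Ω), Z j ω ≤ 1)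
    (μ : ℝ) (hμ : μ = ∫ ω, Z ⟨0, hm⟩ ω ∂(ℙ : Measure Ω)) (hμ0 : 0 < μ) (hμ1 : μ < 1)
    (p₁ : ℝ) (hp : p₁ = ((ℙ : Measure Ω) {ω | Z ⟨0, hm⟩ ω = 1}).toReal)
    (hp0 : 0 < p₁)
    (S H : Ω → ℝ)
    (hS : ∀ ω, S ω = ((1 : ℝ) / m) * ∑ j, Z j ω)
    (hH : ∀ ω, H ω = ∏ j, (if Z j ω = 1 then (1 : ℝ) else 0))
    (SNR : (Ω → ℝ) → ℝ)
    (hSNR : ∀ X : Ω → ℝ, SNR X = (∫ ω, X ω ∂(ℙ : Measure Ω)) ^ 2 / variance X (ℙ : Measure Ω)) :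
    (m : ℝ) * (1 / μ) ^ (m - 1) * ((1 - μ ^ m) / (1 - μ)) ≤ SNR S / SNR H ∧
    (m : ℝ) ^ 2 ≤ (m : ℝ) * (1 / μ) ^ (m - 1) * ((1 - μ ^ m) / (1 - μ)) := by
  set i₀ : Fin m := ⟨0, hm⟩
  have : Nonempty (Fin m) := ⟨i₀⟩
  have hZ : ∀ j, IdentDistrib (Z j) (Z i₀) :=
    fun j => ⟨(hmeas j).aemeasurable, (hmeas i₀).aemeasurable, hident j⟩
  have hIcc : ∀ᵐ ω, Z i₀ ω ∈ Set.Icc (0 : ℝ) 1 := by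
    filter_upwards [h0 i₀, h1 i₀] with ω h0ω h1ω using ⟨h0ω, h1ω⟩
  have hL2 : ∀ j, MemLp (Z j) 2 :=
    fun j => (hZ j).memLp_iff.2 (memLp_of_bounded hIcc (hmeas i₀).aestronglyMeasurable 2)
  rw [← measureReal_def] at hp
  have hp₁μ : p₁ ≤ μ := by
    simpa [hp, hμ] using mul_measureReal_eq_le_integral (h0 i₀) ((hL2 i₀).integrable one_le_two)
      zero_le_one
  have hvar : 0 < variance (Z i₀) ℙ :=
    variance_pos_of_measureReal_pos (hL2 i₀) (hμ ▸ hμ1.ne') (hp ▸ hp0)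
  have hSNR_S : m * μ / (1 - μ) ≤ SNR S := by
    have hS' : S = fun ω => (1 : ℝ) / Fintype.card (Fin m) * ∑ j, Z j ω := by simpa using funext hS
    rw [hSNR, ← snr, hS']
    simpa using mul_div_one_sub_le_snr_average hL2 (fun i j hij => hindep.indepFun hij) hZ hIcc
      hvar hμ.symm hμ0
  have hSNR_H : SNR H = p₁ ^ m / (1 - p₁ ^ m) := by
    rw [hSNR, ← snr, funext hH, snr_prod_ite_eq_one hmeas hindep hZ, Fintype.card_fin, hp]
  have hp₁m : p₁ ^ m ≤ μ ^ m := pow_le_pow_left₀ hp0.le hp₁μ m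
  have hμm : μ ^ m < 1 := pow_lt_one₀ hμ0.le hμ1 (by omega)
  refine ⟨?_, ?_⟩
  · rw [← mul_div_one_sub_div_pow_div_one_sub_pow hμ0.ne' hm, hSNR_H]
    exact div_le_div₀ (hSNR_S.trans' (by positivity)) hSNR_S
      (div_pos (pow_pos hp0 m) (by linarith))
      (div_one_sub_le_div_one_sub (pow_nonneg hp0.le m) hp₁m hμm)
  · rw [sq, mul_assoc]
    exact mul_le_mul_of_nonneg_left (natCast_le_inv_pow_mul_geom hμ0 hμ1 m) m.cast_nonneg

/-- SNR dominance of the smooth estimator over the sharp estimator.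
For i.i.d. copies `Z₁,…,Z_m` of a `[0,1]`-valued random variable `Z` with mean
`μ ∈ (0,1)` and `p₁ := P[Z = 1] ∈ (0,1)`, defining `S_m := (1/m) Σⱼ Zⱼ`,
`H_m := Πⱼ 1{Zⱼ = 1}`, and `SNR(X) := (E[X])² / Var(X)`, we have
`SNR(S_m)/SNR(H_m) ≥ m (1/μ)^(m−1) (1 − μ^m)/(1 − μ) ≥ m²`. -/
theorem stmt_6 {Ω : Type*} [MeasureSpace Ω] [IsProbabilityMeasure (ℙ : Measure Ω)]
    (m : ℕ) (hm : 1 ≤ m)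
    (Z : Fin m → Ω → ℝ) (hmeas : ∀ j, Measurable (Z j))
    (hindep : iIndepFun Z (ℙ : Measure Ω))
    (hident : ∀ j, Measure.map (Z j) (ℙ : Measure Ω) = Measure.map (Z ⟨0, hm⟩) (ℙ : Measure Ω))
    (h0 : ∀ j, ∀ᵐ ω ∂(ℙ : Measure Ω), 0 ≤ Z j ω)
    (h1 : ∀ j, ∀ᵐ ω ∂(ℙ : Measure Ω), Z j ω ≤ 1)
    (μ : ℝ) (hμ : μ = ∫ ω, Z ⟨0, hm⟩ ω ∂(ℙ : Measure Ω)) (hμ0 : 0 < μ) (hμ1 : μ < 1)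
    (p₁ : ℝ) (hp : p₁ = ((ℙ : Measure Ω) {ω | Z ⟨0, hm⟩ ω = 1}).toReal)
    (hp0 : 0 < p₁) (hp1 : p₁ < 1)
    (S H : Ω → ℝ)
    (hS : ∀ ω, S ω = ((1 : ℝ) / m) * ∑ j, Z j ω)
    (hH : ∀ ω, H ω = ∏ j, (if Z j ω = 1 then (1 : ℝ) else 0))
    (SNR : (Ω → ℝ) → ℝ)
    (hSNR : ∀ X : Ω → ℝ, SNR X = (∫ ω, X ω ∂(ℙ : Measure Ω)) ^ 2 / variance X (ℙ : Measure Ω)) :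
    (m : ℝ) * (1 / μ) ^ (m - 1) * ((1 - μ ^ m) / (1 - μ)) ≤ SNR S / SNR H ∧
    (m : ℝ) ^ 2 ≤ (m : ℝ) * (1 / μ) ^ (m - 1) * ((1 - μ ^ m) / (1 - μ)) :=
  stmt_6_general m hm Z hmeas hindep hident h0 h1 μ hμ hμ0 hμ1 p₁ hp hp0 S H hS hH SNR hSNR
end

section
/- Let r, r′ ∼ N(μ, Σ) be i.i.d. n-dimensional Gaussian vectors, and let x = f(r) ∈ {1,…,n} depend only on r. Then E[|r_x − r′_x|] ≤ β √(E[σ_x²]) where β := 1 + √(2 log(2n) + 2) and σ_j² := Σ_{jj}. -/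
open MeasureTheory ProbabilityTheory
open Real Set
open scoped NNReal

/-!
Centre the coordinates, `Y = r - μ` and `Y' = r' - μ`, so that
`|r_x - r'_x| ≤ |Y_x| + |Y'_x|`. Each `Y_j` is `N(0, σ_j²)`, hence `Y_j² / σ_j²` exceeds `t` with
probability at most `2 e^{-t/2}`. A union bound over the `n` coordinates gives the same tail,
times `n`, for `Y_x² / σ_x²` however `x` depends on `r`, and the layer-cake formula turns it into
`E[Y_x² / σ_x²] ≤ 2 log (2n) + 2`; Cauchy–Schwarz then gives
`E|Y_x| ≤ √(2 log (2n) + 2) √(E σ_x²)`. As `Y'` is independent of `x`,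
`E|Y'_x| = ∑_j P(x = j) E|Y'_j| ≤ ∑_j P(x = j) σ_j ≤ √(E σ_x²)` by Jensen.
-/

namespace ProbabilityTheory

variable {Ω : Type*} {mΩ : MeasurableSpace Ω} {P : Measure Ω} {X : Ω → ℝ} {v : ℝ≥0}

lemma HasLaw.hasSubgaussianMGF_gaussianReal (hX : HasLaw X (gaussianReal 0 v) P) :
    HasSubgaussianMGF X v P := by
  rw [← HasSubgaussianMGF.id_map_iff hX.aemeasurable, hX.map_eq]
  exact ⟨integrable_exp_mul_gaussianReal, fun t => by simp [mgf_id_gaussianReal]⟩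

lemma HasLaw.integral_sq_gaussianReal (hX : HasLaw X (gaussianReal 0 v) P) :
    ∫ ω, X ω ^ 2 ∂P = v := by
  rw [← variance_of_integral_eq_zero hX.aemeasurable, hX.variance_eq, variance_id_gaussianReal]
  rw [hX.integral_eq, integral_id_gaussianReal]

lemma hasLaw_sub_of_map_sum_eq_gaussianReal {ι : Type*} [Fintype ι] {r : Ω → ι → ℝ}
    (hr : Measurable r) {μ : ι → ℝ} {S : Matrix ι ι ℝ}
    (hgauss : ∀ a : ι → ℝ, P.map (fun ω => ∑ j, a j * r ω j) =
      gaussianReal (∑ j, a j * μ j) (dotProduct a (S.mulVec a)).toNNReal) (j : ι) :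
    HasLaw (fun ω => r ω j - μ j) (gaussianReal 0 (S j j).toNNReal) P := by
  classical
  have hcoord : HasLaw (fun ω => r ω j) (gaussianReal (μ j) (S j j).toNNReal) P :=
    ⟨by fun_prop, by simpa [Pi.single_apply] using hgauss (Pi.single j 1)⟩
  simpa using gaussianReal_sub_const hcoord (μ j)

lemma HasSubgaussianMGF.measureReal_sq_div_ge_le [IsFiniteMeasure P]
    (h : HasSubgaussianMGF X v P) {t : ℝ} (ht : 0 < t) :
    P.real {ω | t ≤ X ω ^ 2 / v} ≤ 2 * exp (-t / 2) := by
  rcases eq_or_ne v 0 with rfl | hv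
  · simp [ht.not_ge]
    positivity
  have hv0 : (0 : ℝ) < v := by positivity
  set s := √(t * v)
  have hs : 0 ≤ s := sqrt_nonneg _
  have hsub : {ω | t ≤ X ω ^ 2 / v} ⊆ {ω | s ≤ X ω} ∪ {ω | s ≤ (-X) ω} := fun ω hω => by
    have : s ≤ |X ω| := by
      rw [← sqrt_sq_eq_abs]
      exact sqrt_le_sqrt ((le_div_iff₀ hv0).1 hω)
    exact le_abs.1 this
  have hexp : exp (-s ^ 2 / (2 * v)) = exp (-t / 2) := by
    rw [sq_sqrt (by positivity)]
    field_simp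
  calc P.real {ω | t ≤ X ω ^ 2 / v}
      ≤ P.real {ω | s ≤ X ω} + P.real {ω | s ≤ (-X) ω} :=
        (measureReal_mono hsub).trans (measureReal_union_le _ _)
    _ ≤ exp (-t / 2) + exp (-t / 2) := by
        rw [← hexp]; exact add_le_add (h.measure_ge_le hs) (h.neg.measure_ge_le hs)
    _ = 2 * exp (-t / 2) := by ring

lemma integral_abs_le_sqrt_mul_sqrt {U V W : Ω → ℝ} (hV : Integrable V P) (hW : Integrable W P)
    (hV0 : 0 ≤ᵐ[P] V) (hW0 : 0 ≤ᵐ[P] W) (hUVW : ∀ᵐ ω ∂P, U ω ^ 2 ≤ V ω * W ω) :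
    ∫ ω, |U ω| ∂P ≤ √(∫ ω, V ω ∂P) * √(∫ ω, W ω ∂P) := by
  by_cases hU : Integrable (fun ω => |U ω|) P
  swap
  · rw [integral_undef hU]; positivity
  have memLp_sqrt : ∀ {F : Ω → ℝ}, Integrable F P → 0 ≤ᵐ[P] F → MemLp (fun ω => √(F ω)) 2 P :=
    fun {F} hF hF0 => (memLp_two_iff_integrable_sq
      (continuous_sqrt.comp_aestronglyMeasurable hF.1)).2
      (hF.congr (by filter_upwards [hF0] with ω h using (sq_sqrt h).symm))
  have integral_sqrt_rpow_two : ∀ {F : Ω → ℝ}, 0 ≤ᵐ[P] F →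
      (∫ ω, √(F ω) ^ (2 : ℝ) ∂P) ^ (1 / (2 : ℝ)) = √(∫ ω, F ω ∂P) := fun {F} hF0 => by
    rw [← sqrt_eq_rpow]
    congr 1
    refine integral_congr_ae ?_
    filter_upwards [hF0] with ω h
    rw [rpow_two, sq_sqrt h]
  calc ∫ ω, |U ω| ∂P ≤ ∫ ω, √(V ω) * √(W ω) ∂P := by
        refine integral_mono_ae hU ((memLp_sqrt hV hV0).integrable_mul (memLp_sqrt hW hW0)) ?_
        filter_upwards [hUVW, hV0] with ω h hVω
        rw [← sqrt_mul hVω, ← sqrt_sq_eq_abs]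
        exact sqrt_le_sqrt h
    _ ≤ _ := by
        have := integral_mul_le_Lp_mul_Lq_of_nonneg Real.HolderConjugate.two_two
          (ae_of_all _ fun ω => sqrt_nonneg (V ω)) (ae_of_all _ fun ω => sqrt_nonneg (W ω))
          (by simpa using memLp_sqrt hV hV0) (by simpa using memLp_sqrt hW hW0)
        rwa [integral_sqrt_rpow_two hV0, integral_sqrt_rpow_two hW0] at this

lemma integrable_and_integral_le_of_measureReal_le_mul_exp [IsProbabilityMeasure P] {Z : Ω → ℝ}
    (hZm : AEMeasurable Z P) (hZ0 : 0 ≤ᵐ[P] Z) {C c : ℝ} (hC : 1 ≤ C) (hc : 0 < c)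
    (htail : ∀ t, 0 < t → P.real {ω | t ≤ Z ω} ≤ C * exp (-c * t)) :
    Integrable Z P ∧ ∫ ω, Z ω ∂P ≤ (log C + 1) / c := by
  set a := log C / c
  have ha : 0 ≤ a := div_nonneg (log_nonneg hC) hc.le
  have hac : a * c = log C := div_mul_cancel₀ _ hc.ne'
  have hexp_int : IntegrableOn (fun t => C * exp (-c * t)) (Ioi a) :=
    (integrableOn_exp_mul_Ioi (neg_neg_of_pos hc) a).const_mul C
  have hexp : ∫ t in Ioi a, C * exp (-c * t) = 1 / c := by
    have : exp (-c * a) = C⁻¹ := by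
      rw [neg_mul, mul_comm, hac, exp_neg, exp_log (by linarith)]
    rw [integral_const_mul, integral_exp_mul_Ioi (neg_neg_of_pos hc), this]
    field_simp
  have hlint : ∫⁻ ω, ENNReal.ofReal (Z ω) ∂P ≤ ENNReal.ofReal ((log C + 1) / c) := by
    rw [lintegral_eq_lintegral_meas_le P hZ0 hZm, ← Ioc_union_Ioi_eq_Ioi ha,
      lintegral_union measurableSet_Ioi (Ioc_disjoint_Ioi le_rfl)]
    have hsmall : ∫⁻ t in Ioc 0 a, P {ω | t ≤ Z ω} ≤ ENNReal.ofReal a :=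
      (setLIntegral_mono' measurableSet_Ioc fun t _ => prob_le_one).trans (by simp)
    have hlarge : ∫⁻ t in Ioi a, P {ω | t ≤ Z ω} ≤ ENNReal.ofReal (1 / c) := by
      rw [← hexp,
        ofReal_integral_eq_lintegral_ofReal hexp_int (ae_of_all _ fun t => by positivity)]
      refine setLIntegral_mono' measurableSet_Ioi fun t ht => ?_
      rw [← ofReal_measureReal]
      exact ENNReal.ofReal_le_ofReal (htail t (ha.trans_lt ht))
    calc _ ≤ ENNReal.ofReal a + ENNReal.ofReal (1 / c) := add_le_add hsmall hlarge
      _ = _ := by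
        rw [← ENNReal.ofReal_add ha (by positivity), ← hac]
        field_simp
  refine ⟨⟨hZm.aestronglyMeasurable,
    (hasFiniteIntegral_iff_ofReal hZ0).2 (hlint.trans_lt ENNReal.ofReal_lt_top)⟩, ?_⟩
  rw [integral_eq_lintegral_of_nonneg_ae hZ0 hZm.aestronglyMeasurable]
  exact ENNReal.toReal_le_of_le_ofReal (div_nonneg (by linarith [log_nonneg hC]) hc.le) hlint

section RandomIndex

variable {ι : Type*} [Fintype ι]

lemma comp_index_eq_sum_indicator (Z : ι → Ω → ℝ) (x : Ω → ι) (ω : Ω) :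
    Z (x ω) ω = ∑ j, (x ⁻¹' {j}).indicator (Z j) ω := by
  classical
  simp [Set.indicator_apply, eq_comm]

lemma measureReal_sq_div_comp_index_ge_le [IsFiniteMeasure P] {Y : ι → Ω → ℝ} {v : ι → ℝ≥0}
    (hY : ∀ j, HasSubgaussianMGF (Y j) (v j) P) (x : Ω → ι) {t : ℝ} (ht : 0 < t) :
    P.real {ω | t ≤ Y (x ω) ω ^ 2 / v (x ω)} ≤ 2 * Fintype.card ι * exp (-(1 / 2) * t) :=
  calc P.real {ω | t ≤ Y (x ω) ω ^ 2 / v (x ω)}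
      ≤ P.real (⋃ j, {ω | t ≤ Y j ω ^ 2 / v j}) :=
        measureReal_mono fun ω hω => mem_iUnion.2 ⟨x ω, hω⟩
    _ ≤ ∑ j, P.real {ω | t ≤ Y j ω ^ 2 / v j} := measureReal_iUnion_fintype_le _
    _ ≤ ∑ _j : ι, 2 * exp (-t / 2) :=
        Finset.sum_le_sum fun j _ => (hY j).measureReal_sq_div_ge_le ht
    _ = _ := by
        rw [Finset.sum_const, Finset.card_univ, nsmul_eq_mul]
        ring_nf

variable [MeasurableSpace ι] [MeasurableSingletonClass ι] {x : Ω → ι}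

lemma integrable_comp_index (hx : Measurable x) {Z : ι → Ω → ℝ}
    (hZ : ∀ j, Integrable (Z j) P) : Integrable (fun ω => Z (x ω) ω) P := by
  simp_rw [comp_index_eq_sum_indicator Z x]
  exact integrable_finsetSum _ fun j _ => (hZ j).indicator (hx (measurableSet_singleton j))

lemma aestronglyMeasurable_comp_index (hx : Measurable x) {Z : ι → Ω → ℝ}
    (hZ : ∀ j, AEStronglyMeasurable (Z j) P) : AEStronglyMeasurable (fun ω => Z (x ω) ω) P := by
  simp_rw [comp_index_eq_sum_indicator Z x]
  exact Finset.aestronglyMeasurable_fun_sum _ fun j _ =>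
    (hZ j).indicator (hx (measurableSet_singleton j))

lemma integral_comp_index_of_indepFun (hx : Measurable x) {Z : ι → Ω → ℝ}
    (hZ : ∀ j, Integrable (Z j) P) (hind : ∀ j, IndepFun x (Z j) P) :
    ∫ ω, Z (x ω) ω ∂P = ∑ j, P.real (x ⁻¹' {j}) * ∫ ω, Z j ω ∂P := by
  simp_rw [comp_index_eq_sum_indicator Z x]
  rw [integral_finsetSum _ fun j _ => (hZ j).indicator (hx (measurableSet_singleton j))]
  refine Finset.sum_congr rfl fun j _ => ?_
  have hxj : MeasurableSet (x ⁻¹' {j}) := hx (measurableSet_singleton j)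
  have hcomp : ({j} : Set ι).indicator (1 : ι → ℝ) ∘ x = (x ⁻¹' {j}).indicator 1 := by
    ext ω; by_cases h : x ω = j <;> simp [h]
  have hind' := (hind j).comp
    (Measurable.indicator (f := (1 : ι → ℝ)) measurable_one (measurableSet_singleton j))
    measurable_id
  rw [hcomp, Function.id_comp] at hind'
  have hmul : (x ⁻¹' {j}).indicator (Z j) = (x ⁻¹' {j}).indicator 1 * Z j := by
    ext ω; by_cases h : ω ∈ x ⁻¹' {j} <;> simp [h]
  rw [hmul, hind'.integral_mul_eq_mul_integral
    (aestronglyMeasurable_const.indicator hxj) (hZ j).1, integral_indicator_one hxj]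

lemma integral_abs_comp_index_le_of_hasSubgaussianMGF [IsProbabilityMeasure P]
    {Y : ι → Ω → ℝ} {v : ι → ℝ≥0} (hY : ∀ j, HasSubgaussianMGF (Y j) (v j) P)
    (hx : Measurable x) :
    ∫ ω, |Y (x ω) ω| ∂P ≤ √(2 * log (2 * Fintype.card ι) + 2) * √(∫ ω, (v (x ω) : ℝ) ∂P) := by
  have : Nonempty ι := ⟨x (nonempty_of_isProbabilityMeasure P).some⟩
  set W : Ω → ℝ := fun ω => Y (x ω) ω ^ 2 / v (x ω)
  have hW0 : 0 ≤ᵐ[P] W := ae_of_all _ fun ω => by positivity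
  have hWm : AEMeasurable W P :=
    (aestronglyMeasurable_comp_index (Z := fun j ω => Y j ω ^ 2 / v j) hx
      fun j => (((hY j).aemeasurable.pow_const 2).div_const _).aestronglyMeasurable).aemeasurable
  obtain ⟨hWint, hW_le⟩ := integrable_and_integral_le_of_measureReal_le_mul_exp hWm hW0
    (by have := Fintype.card_pos (α := ι); norm_cast; omega) (by norm_num)
    fun t ht => measureReal_sq_div_comp_index_ge_le hY x ht
  have hsq : ∀ᵐ ω ∂P, Y (x ω) ω ^ 2 ≤ v (x ω) * W ω := by
    have : ∀ᵐ ω ∂P, ∀ j, Y j ω ^ 2 = v j * (Y j ω ^ 2 / v j) := by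
      refine ae_all_iff.2 fun j => ?_
      rcases eq_or_ne (v j) 0 with h0 | h0
      -- `Y j ω ^ 2 / 0 = 0`, but then `Y j = 0` a.e.
      · filter_upwards [(h0 ▸ hY j).ae_eq_zero_of_hasSubgaussianMGF_zero] with ω hω
        simp [hω]
      · exact ae_of_all _ fun ω => (mul_div_cancel₀ _ (by exact_mod_cast h0)).symm
    filter_upwards [this] with ω h using (h (x ω)).le
  have hV : Integrable (fun ω => (v (x ω) : ℝ)) P :=
    integrable_comp_index (Z := fun j _ => (v j : ℝ)) hx fun j => integrable_const _
  calc ∫ ω, |Y (x ω) ω| ∂P ≤ √(∫ ω, (v (x ω) : ℝ) ∂P) * √(∫ ω, W ω ∂P) :=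
        integral_abs_le_sqrt_mul_sqrt hV hWint (ae_of_all _ fun _ => by positivity) hW0 hsq
    _ ≤ √(∫ ω, (v (x ω) : ℝ) ∂P) * √(2 * log (2 * Fintype.card ι) + 2) := by
        gcongr
        exact hW_le.trans_eq (by ring)
    _ = _ := mul_comm _ _

lemma integral_abs_comp_index_le_of_indepFun [IsProbabilityMeasure P] {Y : ι → Ω → ℝ}
    {s : ι → ℝ} (hY : ∀ j, MemLp (Y j) 2 P) (hYs : ∀ j, ∫ ω, Y j ω ^ 2 ∂P ≤ s j)
    (hx : Measurable x) (hind : ∀ j, IndepFun x (Y j) P) :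
    ∫ ω, |Y (x ω) ω| ∂P ≤ √(∫ ω, s (x ω) ∂P) := by
  have hs0 : ∀ j, 0 ≤ s j := fun j => (integral_nonneg fun ω => sq_nonneg _).trans (hYs j)
  have habs : ∀ j, ∫ ω, |Y j ω| ∂P ≤ √(s j) := fun j => by
    have := integral_abs_le_sqrt_mul_sqrt (U := Y j) (integrable_const 1) (hY j).integrable_sq
      (ae_of_all _ fun _ => zero_le_one) (ae_of_all _ fun _ => sq_nonneg _)
      (ae_of_all _ fun ω => by simp)
    refine le_trans ?_ (sqrt_le_sqrt (hYs j))
    simpa using this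
  have hp_sum : ∑ j, P.real (x ⁻¹' {j}) = 1 := by
    rw [sum_measureReal_preimage_singleton _ fun j _ => hx (measurableSet_singleton j)]
    simp
  calc ∫ ω, |Y (x ω) ω| ∂P = ∑ j, P.real (x ⁻¹' {j}) * ∫ ω, |Y j ω| ∂P :=
        integral_comp_index_of_indepFun (Z := fun j ω => |Y j ω|) hx
          (fun j => ((hY j).integrable one_le_two).abs)
          fun j => (hind j).comp measurable_id measurable_abs
    _ ≤ ∑ j, P.real (x ⁻¹' {j}) * √(s j) := by
        gcongr with j
        exact habs j
    _ ≤ √(∑ j, P.real (x ⁻¹' {j}) * s j) :=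
        strictConcaveOn_sqrt.concaveOn.le_map_sum (fun j _ => measureReal_nonneg) hp_sum
          fun j _ => hs0 j
    _ = √(∫ ω, s (x ω) ∂P) := by
        rw [integral_comp_index_of_indepFun (Z := fun j _ => s j) hx
          (fun j => integrable_const _) fun j => indepFun_const_right x (s j)]
        simp

end RandomIndex

end ProbabilityTheory

theorem stmt_15_general {Ω : Type*} [MeasureSpace Ω] [IsProbabilityMeasure (ℙ : Measure Ω)]
    (n : ℕ)
    (r r' : Ω → Fin n → ℝ) (hr : Measurable r) (hr' : Measurable r')
    (hindep : IndepFun r r' (ℙ : Measure Ω))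
    (hident : Measure.map r (ℙ : Measure Ω) = Measure.map r' (ℙ : Measure Ω))
    (μ : Fin n → ℝ) (Sigma_mat : Matrix (Fin n) (Fin n) ℝ) (hpsd : Sigma_mat.PosSemidef)
    (hgauss : ∀ a : Fin n → ℝ,
      Measure.map (fun ω => ∑ j, a j * r ω j) (ℙ : Measure Ω) =
        gaussianReal (∑ j, a j * μ j) (Real.toNNReal (dotProduct a (Sigma_mat.mulVec a))))
    (f : (Fin n → ℝ) → Fin n) (hf : Measurable f)
    (x : Ω → Fin n) (hx : ∀ ω, x ω = f (r ω)) :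
    (∫ ω, |r ω (x ω) - r' ω (x ω)| ∂(ℙ : Measure Ω)) ≤
      (1 + Real.sqrt (2 * Real.log (2 * n) + 2)) *
        Real.sqrt (∫ ω, Sigma_mat (x ω) (x ω) ∂(ℙ : Measure Ω)) := by
  have hv : ∀ j, ((Sigma_mat j j).toNNReal : ℝ) = Sigma_mat j j := fun j =>
    coe_toNNReal _ hpsd.diag_nonneg
  have hY := hasLaw_sub_of_map_sum_eq_gaussianReal hr hgauss
  have hY' : ∀ j, HasLaw (fun ω => r' ω j - μ j) (gaussianReal 0 (Sigma_mat j j).toNNReal) ℙ :=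
    fun j => HasLaw.comp_of_hasLaw_comp (f := fun w => w j - μ j)
      (by fun_prop : Measurable fun w : Fin n → ℝ => w j - μ j).aemeasurable
      ⟨hr.aemeasurable, rfl⟩ ⟨hr'.aemeasurable, hident.symm⟩ (hY j)
  have hxm : Measurable x := by rw [funext hx]; exact hf.comp hr
  have hind : ∀ j, IndepFun x (fun ω => r' ω j - μ j) ℙ := fun j => by
    rw [funext hx]; exact hindep.comp hf ((measurable_pi_apply j).sub_const (μ j))
  have hterm := integral_abs_comp_index_le_of_hasSubgaussianMGF
    (fun j => (hY j).hasSubgaussianMGF_gaussianReal) hxm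
  have hterm' := integral_abs_comp_index_le_of_indepFun
    (fun j => (hY' j).hasSubgaussianMGF_gaussianReal.memLp 2)
    (fun j => ((hY' j).integral_sq_gaussianReal.trans (hv j)).le) hxm hind
  simp only [hv, Fintype.card_fin] at hterm
  have hint : ∀ {Z : Fin n → Ω → ℝ},
      (∀ j, HasLaw (Z j) (gaussianReal 0 (Sigma_mat j j).toNNReal) ℙ) →
      Integrable (fun ω => |Z (x ω) ω|) ℙ := fun {Z} hZ =>
    integrable_comp_index (Z := fun j ω => |Z j ω|) hxm
      fun j => (hZ j).hasSubgaussianMGF_gaussianReal.integrable.abs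
  calc ∫ ω, |r ω (x ω) - r' ω (x ω)|
      ≤ ∫ ω, (|r ω (x ω) - μ (x ω)| + |r' ω (x ω) - μ (x ω)|) :=
        integral_mono_of_nonneg (ae_of_all _ fun _ => abs_nonneg _) ((hint hY).add (hint hY'))
          (ae_of_all _ fun ω => by
            simpa only [abs_sub_comm (μ (x ω))] using abs_sub_le (r ω (x ω)) (μ (x ω)) (r' ω (x ω)))
    _ = (∫ ω, |r ω (x ω) - μ (x ω)|) + ∫ ω, |r' ω (x ω) - μ (x ω)| :=
        integral_add (hint hY) (hint hY')
    _ ≤ _ := by linarith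

/-- Let `r, r′ ∼ N(μ, Σ)` be i.i.d. `n`-dimensional Gaussian vectors
(every linear combination is Gaussian with the prescribed mean and variance), and let
the index `x = f(r)` depend measurably only on `r`. With `β := 1 + √(2 log(2n) + 2)`
and `σⱼ² := Σⱼⱼ`, `E[|r_x − r′_x|] ≤ β √(E[σ_x²])`. -/
theorem stmt_15 {Ω : Type*} [MeasureSpace Ω] [IsProbabilityMeasure (ℙ : Measure Ω)]
    (n : ℕ) (hn : 1 ≤ n)
    (r r' : Ω → Fin n → ℝ) (hr : Measurable r) (hr' : Measurable r')
    (hindep : IndepFun r r' (ℙ : Measure Ω))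
    (hident : Measure.map r (ℙ : Measure Ω) = Measure.map r' (ℙ : Measure Ω))
    (μ : Fin n → ℝ) (Sigma_mat : Matrix (Fin n) (Fin n) ℝ) (hpsd : Sigma_mat.PosSemidef)
    (hgauss : ∀ a : Fin n → ℝ,
      Measure.map (fun ω => ∑ j, a j * r ω j) (ℙ : Measure Ω) =
        gaussianReal (∑ j, a j * μ j) (Real.toNNReal (dotProduct a (Sigma_mat.mulVec a))))
    (f : (Fin n → ℝ) → Fin n) (hf : Measurable f)
    (x : Ω → Fin n) (hx : ∀ ω, x ω = f (r ω)) :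
    (∫ ω, |r ω (x ω) - r' ω (x ω)| ∂(ℙ : Measure Ω)) ≤
      (1 + Real.sqrt (2 * Real.log (2 * n) + 2)) *
        Real.sqrt (∫ ω, Sigma_mat (x ω) (x ω) ∂(ℙ : Measure Ω)) :=
  stmt_15_general n r r' hr hr' hindep hident μ Sigma_mat hpsd hgauss f hf x hx
end

section
/- Let a Gaussian process (finite multivariate Gaussian r ∼ N(μ, Σ) with all marginal variances ≤ 1) be observed sequentially at points x_1,…,x_T with observations y_t = r_{x_t} + η_t, where η_t ∼ N(0, σ_{x_t}²) are independent with σ_{x_t} ≤ σ. Let σ_{t−1}²(x_t) denote the posterior variance of r_{x_t} given y_1,…,y_{t−1}. Then the mutual information satisfies I(y_{1:T}; r) = (1/2) Σ_{t=1}^T ln(1 + σ_{x_t}^{−2} σ_{t−1}²(x_t)), and consequently Σ_{t=1}^T σ_{t−1}²(x_t) ≤ C_σ · I(y_{1:T}; r) with C_σ := 2/ln(1 + σ^{−2}). -/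
/-!
Ordering the observations, the Gram matrix `K + D` of `y_{1:T}` factors by successive Schur
complements: the `t`-th pivot is the conditional variance of `y_t` given `y_{1:t-1}`, namely
`σ_{x_t}² + σ_{t-1}²(x_t)`. Hence `det (K + D) = ∏_t (σ_{x_t}² + σ_{t-1}²(x_t))`, and dividing by
`det D = ∏_t σ_{x_t}²` gives the information identity. For the bound, Bernoulli's inequality
`(1 + s)^v ≤ 1 + s v` for `v ∈ [0, 1]` gives `v ln (1 + s) ≤ ln (1 + s v)`; apply it with
`s = σ⁻²` and `v = σ_{t-1}²(x_t) ≤ 1`, then use `σ_{x_t} ≤ σ`.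
-/

open Finset Matrix

namespace Matrix

section SchurPivot

variable {𝕜 : Type*} [Field 𝕜] {n : ℕ}

noncomputable def schurLast (N : Matrix (Fin (n + 1)) (Fin (n + 1)) 𝕜) : 𝕜 :=
  N (Fin.last n) (Fin.last n) -
    (fun j => N (Fin.last n) j.castSucc) ⬝ᵥ
      (N.submatrix Fin.castSucc Fin.castSucc)⁻¹ *ᵥ fun i => N i.castSucc (Fin.last n)

/-- The `t`-th pivot of Gaussian elimination (the `D` of an `LDU` factorization). -/
noncomputable def schurPivot (M : Matrix (Fin n) (Fin n) 𝕜) (t : Fin n) : 𝕜 :=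
  schurLast (M.submatrix (Fin.castLE t.isLt) (Fin.castLE t.isLt))

theorem det_eq_det_mul_schurLast (N : Matrix (Fin (n + 1)) (Fin (n + 1)) 𝕜)
    (hA : IsUnit (N.submatrix Fin.castSucc Fin.castSucc).det) :
    N.det = (N.submatrix Fin.castSucc Fin.castSucc).det * schurLast N := by
  have := (N.submatrix Fin.castSucc Fin.castSucc).invertibleOfIsUnitDet hA
  have hlast : ∀ i : Fin 1, finSumFinEquiv (Sum.inr i) = Fin.last n := fun i => by
    ext; simp
  have hblocks : N.submatrix finSumFinEquiv finSumFinEquiv =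
      fromBlocks (N.submatrix Fin.castSucc Fin.castSucc)
        (replicateCol (Fin 1) fun i => N i.castSucc (Fin.last n))
        (replicateRow (Fin 1) fun j => N (Fin.last n) j.castSucc)
        (of fun _ _ => N (Fin.last n) (Fin.last n)) := by
    ext (i | i) (j | j) <;> simp [hlast] <;> rfl
  rw [← det_submatrix_equiv_self finSumFinEquiv, hblocks, det_fromBlocks₁₁, det_fin_one,
    Matrix.mul_assoc, ← replicateCol_mulVec, invOf_eq_nonsing_inv]
  rfl

theorem det_eq_prod_schurPivot (M : Matrix (Fin n) (Fin n) 𝕜)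
    (hM : ∀ t : Fin n, IsUnit (M.submatrix (Fin.castLE t.isLt.le) (Fin.castLE t.isLt.le)).det) :
    M.det = ∏ t, schurPivot M t := by
  induction n with
  | zero => simp
  | succ n ih =>
    rw [det_eq_det_mul_schurLast M (hM (Fin.last n)), Fin.prod_univ_castSucc,
      ih _ fun t => hM t.castSucc]
    rfl

theorem schurLast_nonneg {N : Matrix (Fin (n + 1)) (Fin (n + 1)) ℝ} (hN : N.PosSemidef)
    (hA : (N.submatrix Fin.castSucc Fin.castSucc).PosDef) : 0 ≤ schurLast N :=
  nonneg_of_mul_nonneg_right (det_eq_det_mul_schurLast N hA.det_pos.ne'.isUnit ▸ hN.det_nonneg)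
    hA.det_pos

theorem schurPivot_nonneg {M : Matrix (Fin n) (Fin n) ℝ} (hM : M.PosSemidef) (t : Fin n)
    (hA : (M.submatrix (Fin.castLE t.isLt.le) (Fin.castLE t.isLt.le)).PosDef) :
    0 ≤ schurPivot M t :=
  schurLast_nonneg (hM.submatrix _) hA

end SchurPivot

section PosteriorVariance

variable {n : ℕ}

/-- `σ_{t-1}²(x_t)`: the posterior variance of the `t`-th coordinate of `N(0, K)` given noisy
observations of the coordinates before `t`, the noise variances being `d`. -/
noncomputable def posteriorVariance (K : Matrix (Fin n) (Fin n) ℝ) (d : Fin n → ℝ)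
    (t : Fin n) : ℝ :=
  K t t - (fun s => K (Fin.castLE t.isLt.le s) t) ⬝ᵥ
    ((K + diagonal d).submatrix (Fin.castLE t.isLt.le) (Fin.castLE t.isLt.le))⁻¹ *ᵥ
      fun s => K (Fin.castLE t.isLt.le s) t

variable {K : Matrix (Fin n) (Fin n) ℝ} {d : Fin n → ℝ}

theorem schurPivot_add_diagonal (hK : K.IsSymm) (t : Fin n) :
    schurPivot (K + diagonal d) t = d t + posteriorVariance K d t := by
  have hlast : Fin.castLE t.isLt (Fin.last t) = t := rfl
  have hne : ∀ s : Fin t, Fin.castLE t.isLt s.castSucc ≠ t := fun s h =>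
    (Fin.castSucc_lt_last s).ne (Fin.castLE_injective _ (h.trans hlast.symm))
  simp only [schurPivot, schurLast, posteriorVariance, submatrix_apply, hlast, add_apply,
    diagonal_apply_eq, diagonal_apply_ne _ (hne _), diagonal_apply_ne' _ (hne _), add_zero,
    hK.apply t]
  rw [add_sub_right_comm, add_comm]
  rfl

theorem posteriorVariance_le (hK : K.PosSemidef) (hd : 0 ≤ d) (t : Fin n) :
    posteriorVariance K d t ≤ K t t :=
  sub_le_self _ <| by
    simpa using (((hK.add (.diagonal hd)).submatrix _).inv).dotProduct_mulVec_nonneg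
      fun s => K (Fin.castLE t.isLt.le s) t

theorem posteriorVariance_nonneg (hK : K.PosSemidef) (hd : ∀ i, 0 < d i) (t : Fin n) :
    0 ≤ posteriorVariance K d t := by
  -- Silencing the noise at `t` leaves the posterior at `t` unchanged and turns it into a pivot
  -- of the positive semidefinite matrix `K + diagonal d'`.
  let d' := Function.update d t 0
  have hprefix : (K + diagonal d').submatrix (Fin.castLE t.isLt.le) (Fin.castLE t.isLt.le) =
      (K + diagonal d).submatrix (Fin.castLE t.isLt.le) (Fin.castLE t.isLt.le) := by
    ext i j
    have hi : Fin.castLE t.isLt.le i ≠ t := Fin.ne_of_lt i.isLt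
    simp [d', diagonal_apply, hi]
  have hd' : 0 ≤ d' := fun i => by
    rcases eq_or_ne i t with rfl | hi <;> simp [d', *, (hd i).le]
  have hvar : posteriorVariance K d' t = posteriorVariance K d t := by
    rw [posteriorVariance, hprefix, posteriorVariance]
  have hpivot := schurPivot_add_diagonal (d := d') (isHermitian_iff_isSymm.mp hK.isHermitian) t
  rw [show d' t = 0 from Function.update_self .., zero_add, hvar] at hpivot
  rw [← hpivot]
  refine schurPivot_nonneg (hK.add (.diagonal hd')) t ?_
  rw [hprefix]
  exact (PosDef.posSemidef_add hK (.diagonal hd)).submatrix (Fin.castLE_injective _)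

theorem det_add_diagonal_eq_prod (hK : K.PosSemidef) (hd : ∀ i, 0 < d i) :
    (K + diagonal d).det = ∏ t, (d t + posteriorVariance K d t) := by
  rw [det_eq_prod_schurPivot _ fun t =>
    ((PosDef.posSemidef_add hK (.diagonal hd)).submatrix (Fin.castLE_injective _)).det_pos.ne'.isUnit]
  exact prod_congr rfl fun t _ =>
    schurPivot_add_diagonal (isHermitian_iff_isSymm.mp hK.isHermitian) t

theorem log_det_add_diagonal_div_det_diagonal (hK : K.PosSemidef) (hd : ∀ i, 0 < d i) :
    Real.log ((K + diagonal d).det / (diagonal d).det) =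
      ∑ t, Real.log (1 + (d t)⁻¹ * posteriorVariance K d t) := by
  have hratio : ∀ t, (d t + posteriorVariance K d t) / d t =
      1 + (d t)⁻¹ * posteriorVariance K d t := fun t => by
    rw [add_div, div_self (hd t).ne', div_eq_inv_mul]
  rw [det_add_diagonal_eq_prod hK hd, det_diagonal, ← prod_div_distrib, Real.log_prod]
  · simp only [hratio]
  · intro t _
    have := posteriorVariance_nonneg hK hd t
    have := hd t
    positivity

end PosteriorVariance

theorem posSemidef_of_sum_mul_nonneg {ι : Type*} [Fintype ι] {M : Matrix ι ι ℝ}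
    (hM : M.IsSymm) (h : ∀ a : ι → ℝ, 0 ≤ ∑ i, ∑ j, a i * a j * M i j) : M.PosSemidef :=
  .of_dotProduct_mulVec_nonneg (isHermitian_iff_isSymm.mpr hM) fun a => (h a).trans_eq <| by
    simp only [star_trivial, dotProduct, mulVec, mul_sum]
    exact sum_congr rfl fun i _ => sum_congr rfl fun j _ => by ring

end Matrix

theorem Real.mul_log_one_add_le_log_one_add_mul {s v : ℝ} (hs : -1 < s) (hv₀ : 0 ≤ v)
    (hv₁ : v ≤ 1) : v * Real.log (1 + s) ≤ Real.log (1 + s * v) := by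
  rw [← Real.log_rpow (by linarith), mul_comm s]
  exact Real.log_le_log (Real.rpow_pos_of_pos (by linarith) v)
    (rpow_one_add_le_one_add_mul_self hs.le hv₀ hv₁)

/-- Gaussian information gain. A Gaussian process with kernel matrix
`Sigma_mat` (PSD, marginal variances ≤ 1) is observed at points `x 1, …, x T` with
independent Gaussian noise of standard deviations `σn t ≤ σ`. With `K` the Gram
matrix at the evaluation points, `D` the diagonal noise-covariance matrix,
`v t` the posterior variance of the process at `x t` given the first `t`
observations (given by the standard Gaussian-conditioning formula), and
`I := (1/2) ln(det(K + D)/det D)` the mutual information between the observations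
and the process, it holds that `I = (1/2) Σ_t ln(1 + σn t⁻² v t)` and consequently
`Σ_t v t ≤ C_σ · I` with `C_σ := 2/ln(1 + σ⁻²)`. -/
theorem stmt_17 {ι : Type*}
    (Sigma_mat : Matrix ι ι ℝ)
    (hpsd : ∀ (N : ℕ) (z : Fin N → ι) (a : Fin N → ℝ),
      0 ≤ ∑ i, ∑ j, a i * a j * Sigma_mat (z i) (z j))
    (hsym : ∀ i j, Sigma_mat i j = Sigma_mat j i)
    (hdiag : ∀ i, Sigma_mat i i ≤ 1)
    (T : ℕ) (x : Fin T → ι)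
    (σ : ℝ) (hσ : 0 < σ)
    (σn : Fin T → ℝ) (hσn : ∀ t, 0 < σn t) (hσnb : ∀ t, σn t ≤ σ)
    (K : Matrix (Fin T) (Fin T) ℝ) (hK : ∀ s t, K s t = Sigma_mat (x s) (x t))
    (D : Matrix (Fin T) (Fin T) ℝ)
    (hD : D = Matrix.diagonal (fun t => (σn t) ^ 2))
    (v : Fin T → ℝ)
    (hv : ∀ t : Fin T, v t =
      K t t -
        dotProduct (fun s : Fin t.val => K ⟨s.val, s.isLt.trans t.isLt⟩ t)
          (Matrix.mulVec
            (Matrix.of fun s s' : Fin t.val =>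
              K ⟨s.val, s.isLt.trans t.isLt⟩ ⟨s'.val, s'.isLt.trans t.isLt⟩ +
                (if s = s' then (σn ⟨s.val, s.isLt.trans t.isLt⟩) ^ 2 else 0))⁻¹
            (fun s : Fin t.val => K ⟨s.val, s.isLt.trans t.isLt⟩ t)))
    (I : ℝ) (hI : I = (1 / 2) * Real.log ((K + D).det / D.det)) :
    I = (1 / 2) * ∑ t, Real.log (1 + (σn t)⁻¹ ^ 2 * v t) ∧
    ∑ t, v t ≤ (2 / Real.log (1 + σ⁻¹ ^ 2)) * I := by
  have hKpsd : K.PosSemidef := posSemidef_of_sum_mul_nonneg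
    (IsSymm.ext fun s t => by rw [hK, hK, hsym]) fun a => by simpa only [hK] using hpsd T x a
  have hnoise : ∀ t, 0 < σn t ^ 2 := fun t => pow_pos (hσn t) 2
  have hvar : ∀ t, v t = posteriorVariance K (fun t => σn t ^ 2) t := fun t => by
    rw [hv, posteriorVariance]
    congr 4
    ext s s'
    simp only [of_apply, Matrix.submatrix_apply, Matrix.add_apply, diagonal_apply, Fin.castLE_inj]
    rfl
  have hmi : I = 1 / 2 * ∑ t, Real.log (1 + (σn t)⁻¹ ^ 2 * v t) := by
    rw [hI, hD, log_det_add_diagonal_div_det_diagonal hKpsd hnoise]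
    simp only [hvar, inv_pow]
  refine ⟨hmi, ?_⟩
  have hL : 0 < Real.log (1 + σ⁻¹ ^ 2) := Real.log_pos (lt_add_of_pos_right 1 (by positivity))
  have hterm : ∀ t, v t * Real.log (1 + σ⁻¹ ^ 2) ≤ Real.log (1 + (σn t)⁻¹ ^ 2 * v t) := by
    intro t
    have hv₀ : 0 ≤ v t := hvar t ▸ posteriorVariance_nonneg hKpsd hnoise t
    have hv₁ : v t ≤ 1 := hvar t ▸ (posteriorVariance_le hKpsd (fun t => (hnoise t).le) t).trans
      (hK t t ▸ hdiag _)
    calc v t * Real.log (1 + σ⁻¹ ^ 2) ≤ Real.log (1 + σ⁻¹ ^ 2 * v t) :=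
          Real.mul_log_one_add_le_log_one_add_mul (by linarith [sq_nonneg σ⁻¹]) hv₀ hv₁
      _ ≤ Real.log (1 + (σn t)⁻¹ ^ 2 * v t) := by
          gcongr
          exacts [hσn t, hσnb t]
  rw [div_mul_eq_mul_div, le_div_iff₀ hL, hmi, sum_mul]
  linarith [sum_le_sum fun t (_ : t ∈ univ) => hterm t]
end
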